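/- For every n ≥ 1, sl(4n+1) + sl(4n+3) ≡ sl(4n+4) + sl(4n+6) (mod 2). -/
import Mathlib


def sl : ℕ → ℕ
  | 0 => 0
  | 1 => 2
  | 2 => 1
  | n + 3 => if (n + 3) % 2 = 0 then sl ((n + 3) / 2) else sl (n + 2) + sl (n + 1)
decreasing_by all_goals omega

lemma sl_even (k : ℕ) (h : 2 ≤ k) : sl (2 * k) = sl k := by
  have h3 : 2 * k = (2 * k - 3) + 3 := by omega
  rw [h3, sl]
  rw [if_pos (by omega)]
  congr 1
  omega

lemma sl_odd (k : ℕ) (h : 1 ≤ k) : sl (2 * k + 1) = sl (2 * k) + sl (2 * k - 1) := by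
  have h3 : 2 * k + 1 = (2 * k - 2) + 3 := by omega
  rw [h3, sl]
  rw [if_neg (by omega)]
  have a1 : 2 * k - 2 + 2 = 2 * k := by omega
  have a2 : 2 * k - 2 + 1 = 2 * k - 1 := by omega
  rw [a1, a2]

theorem sl_cong (n : ℕ) (hn : 1 ≤ n) :
    sl (4 * n + 1) + sl (4 * n + 3) ≡ sl (4 * n + 4) + sl (4 * n + 6) [MOD 2] := by
  have e1 := sl_odd (2 * n) (by omega)
  have e2 := sl_odd (2 * n + 1) (by omega)
  have e3 := sl_even (2 * n) (by omega)
  have e4 := sl_even (2 * n + 1) (by omega)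
  have e5 := sl_even (2 * n + 2) (by omega)
  have e6 := sl_even (2 * n + 3) (by omega)
  have e7 := sl_odd (n + 1) (by omega)
  have e8 := sl_even (n + 1) (by omega)
  have h1 : 2 * (2 * n) = 4 * n := by ring
  have h2 : 2 * (2 * n + 1) = 4 * n + 2 := by ring
  have h2' : 2 * (2 * n + 1) + 1 = 4 * n + 3 := by ring
  have h2'' : 2 * (2 * n + 1) - 1 = 4 * n + 1 := by omega
  have h3 : 2 * (2 * n + 2) = 4 * n + 4 := by ring
  have h4 : 2 * (2 * n + 3) = 4 * n + 6 := by ring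
  have h5 : 2 * (n + 1) = 2 * n + 2 := by ring
  have h5' : 2 * (n + 1) + 1 = 2 * n + 3 := by ring
  have h5'' : 2 * (n + 1) - 1 = 2 * n + 1 := by omega
  rw [h1] at e1 e3
  rw [h2', h2'', h2] at e2
  rw [h2] at e4
  rw [h3] at e5
  rw [h4] at e6
  rw [h5', h5'', h5] at e7
  rw [h5] at e8
  unfold Nat.ModEq
  omega
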